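/- arXiv:1702.08108 — 3 statements merged into one kernel-verified Lean document; each statement's English description precedes it below -/
import Mathlib

section
/- Let j ∈ ℤ and g ∈ ℂ[X], and let A := W(j, g(X + j/2)) be the operator realization of tʲ·g(D + j/2) on ℂ[t,t⁻¹] (so A(tᵐ) = g(m + j/2)·tᵐ⁺ʲ). Then σ(A) = −A if and only if g satisfies the parity condition g(−X) = (−1)^{j+1}·g(X) as polynomials; in particular, tʲ·g(D + j/2) is fixed by −σ exactly when j is odd and g is even, or j is even and g is odd. (This is the paper's explicit description of the Lie algebra 𝒟⁻ of elements fixed by −σ.) -/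
open Polynomial LaurentPolynomial

/-! Test both operators on the basis `tᵐ`: `σ(A) = −A` says `(−1)ʲ·g(−m − j/2) = −g(m + j/2)` for
every `m ∈ ℤ`, and a polynomial identity holding at the infinitely many points `m + j/2` holds
identically, i.e. `(−1)ʲ·g(−X) = −g`. -/

/-- The operator realization of the anti-involution `σ` determined by `σ(t) = −t`,
`σ(D) = −D`: on `tᵏ·f(D)` (realized as `W(k,f)`) it is `σ(k,f) = (−1)ᵏ·W(k, f(−X−k))`. -/
noncomputable def sigmaOp
    (W : ℤ → ℂ[X] → Module.End ℂ (LaurentPolynomial ℂ)) (k : ℤ) (f : ℂ[X]) :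
    Module.End ℂ (LaurentPolynomial ℂ) :=
  ((-1 : ℂ) ^ k) • W k (f.comp (-Polynomial.X - Polynomial.C (k : ℂ)))

theorem LaurentPolynomial.linearMap_ext_T {R M : Type*} [Semiring R] [AddCommMonoid M]
    [Module R M] {F G : R[T;T⁻¹] →ₗ[R] M} (h : ∀ m : ℤ, F (T m) = G (T m)) : F = G := by
  refine AddMonoidAlgebra.lhom_ext' fun m => LinearMap.ext fun r => ?_
  have hsingle : (AddMonoidAlgebra.single m r : R[T;T⁻¹]) = r • T m := by
    rw [T, AddMonoidAlgebra.smul_single, smul_eq_mul, mul_one]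
  simp only [LinearMap.comp_apply, AddMonoidAlgebra.lsingle_apply, hsingle, map_smul, h]

theorem Polynomial.eq_of_eval_intCast_eq {R : Type*} [CommRing R] [IsDomain R] [CharZero R]
    {p q : R[X]} (h : ∀ m : ℤ, p.eval (m : R) = q.eval (m : R)) : p = q :=
  eq_of_infinite_eval_eq p q <|
    (Set.infinite_range_of_injective Int.cast_injective).mono (by rintro _ ⟨m, rfl⟩; exact h m)

theorem Polynomial.comp_X_add_C_inj {R : Type*} [CommRing R] {p q : R[X]} (a : R) :
    p.comp (X + Polynomial.C a) = q.comp (X + Polynomial.C a) ↔ p = q := by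
  rw [← sub_eq_zero, ← sub_comp, comp_X_add_C_eq_zero_iff, sub_eq_zero]

theorem smul_W_eq_smul_W_iff {W : ℤ → ℂ[X] → Module.End ℂ ℂ[T;T⁻¹]}
    (hW : ∀ (k : ℤ) (f : ℂ[X]) (m : ℤ), W k f (T m) = f.eval (m : ℂ) • (T (m + k) : ℂ[T;T⁻¹]))
    (k : ℤ) (c c' : ℂ) (f f' : ℂ[X]) :
    c • W k f = c' • W k f' ↔ c • f = c' • f' := by
  have hT : ∀ (b : ℂ) (p : ℂ[X]) (m : ℤ), (b • W k p) (T m) = (b * p.eval (m : ℂ)) • T (m + k) :=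
    fun b p m => by rw [LinearMap.smul_apply, hW, smul_smul]
  calc c • W k f = c' • W k f' ↔ ∀ m : ℤ, c * f.eval (m : ℂ) = c' * f'.eval (m : ℂ) := by
        refine ⟨fun h m => ?_, fun h => linearMap_ext_T fun m => by rw [hT, hT, h]⟩
        have hm := LinearMap.congr_fun h (T m)
        rw [hT, hT] at hm
        exact smul_left_injective ℂ (isUnit_T (m + k)).ne_zero hm
    _ ↔ c • f = c' • f' := by
        refine ⟨fun h => eq_of_eval_intCast_eq fun m => by simpa using h m, fun h m => ?_⟩
        simpa using congrArg (eval (m : ℂ)) h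

/-- for `A := W(j, g(X + j/2))` (realizing `tʲ·g(D + j/2)`), one has
`σ(A) = −A` if and only if `g(−X) = (−1)^{j+1}·g(X)`. -/
theorem sigmaOp_fixed_iff_parity
    (W : ℤ → ℂ[X] → Module.End ℂ (LaurentPolynomial ℂ))
    (hW : ∀ (k : ℤ) (f : ℂ[X]) (m : ℤ),
      W k f (T m) = f.eval (m : ℂ) • (T (m + k) : LaurentPolynomial ℂ))
    (j : ℤ) (g : ℂ[X]) :
    sigmaOp W j (g.comp (Polynomial.X + Polynomial.C ((j : ℂ) / 2))) =
        -(W j (g.comp (Polynomial.X + Polynomial.C ((j : ℂ) / 2)))) ↔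
      g.comp (-Polynomial.X) = ((-1 : ℂ) ^ (j + 1)) • g := by
  set τ : ℂ[X] := X + Polynomial.C ((j : ℂ) / 2)
  have hreflect : (g.comp τ).comp (-X - Polynomial.C (j : ℂ)) = (g.comp (-X)).comp τ := by
    refine Polynomial.funext fun x => ?_
    simp only [τ, eval_comp, eval_add, eval_sub, eval_neg, eval_X, eval_C]
    congr 1
    ring
  have hsign : ((-1 : ℂ) ^ j)⁻¹ = (-1) ^ j := by rw [← inv_zpow, inv_neg_one]
  calc sigmaOp W j (g.comp τ) = -W j (g.comp τ)
        ↔ (-1 : ℂ) ^ j • (g.comp (-X)).comp τ = (-1 : ℂ) • g.comp τ := by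
          rw [sigmaOp, ← neg_one_smul ℂ (W j _), smul_W_eq_smul_W_iff hW, hreflect]
    _ ↔ (-1 : ℂ) ^ j • g.comp (-X) = (-1 : ℂ) • g := by
          rw [← smul_comp _ (g.comp (-X)), ← smul_comp (-1 : ℂ) g]
          exact comp_X_add_C_inj _
    _ ↔ g.comp (-X) = (-1 : ℂ) ^ (j + 1) • g := by
          rw [← hsign, inv_smul_eq_iff₀ (zpow_ne_zero _ (by norm_num)), zpow_add_one₀ (by norm_num),
            mul_smul]
end

section
/- For all integers r, s and all polynomials f, g ∈ ℂ[X], define h ∈ ℂ[X] by h(Y) = f(Y + s/2)·g(Y − r/2) − f(Y − s/2)·g(Y + r/2). Then: (i) the commutator of the operators tʳ·f(D + r/2) and tˢ·g(D + s/2) on ℂ[t,t⁻¹] equals t^{r+s}·h(D + (r+s)/2), i.e. [W(r, f(X + r/2)), W(s, g(X + s/2))] = W(r+s, h(X + (r+s)/2)); and (ii) if f(−X) = (−1)^{r+1}·f(X) and g(−X) = (−1)^{s+1}·g(X), then h(−Y) = (−1)^{r+s+1}·h(Y). Consequently the span 𝒟⁻ of the operators tʲ·g(D + j/2) with g(−X)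 = (−1)^{j+1}·g(X) is closed under commutators, i.e. 𝒟⁻ is a Lie subalgebra of the endomorphism algebra of ℂ[t,t⁻¹]. -/
/-!
`W k f` sends each monomial `tᵐ` to a multiple of `t^{m+k}`, so on `tᵐ` the commutator of `W r f` and `W s g` is `(f(m + s) g(m) − g(m + r) f(m)) t^{m+r+s}`: it is
`W (r + s)` of `f(X + s) g − g(X + r) f`, which after the half-integer shifts is `h(X + (r+s)/2)`.
Substituting `−X` in `h` exchanges its two products up to the signs of `f` and `g`, whence the
parity of `h`. As the commutator is bilinear, it suffices that brackets of the spanning operators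
of `𝒟⁻` stay in `𝒟⁻`.
-/

open Polynomial LaurentPolynomial

/-- The polynomial `h(Y) = f(Y + s/2)·g(Y − r/2) − f(Y − s/2)·g(Y + r/2)`. -/
noncomputable def hPoly (r s : ℤ) (f g : ℂ[X]) : ℂ[X] :=
  f.comp (Polynomial.X + Polynomial.C ((s : ℂ) / 2)) *
      g.comp (Polynomial.X - Polynomial.C ((r : ℂ) / 2)) -
    f.comp (Polynomial.X - Polynomial.C ((s : ℂ) / 2)) *
      g.comp (Polynomial.X + Polynomial.C ((r : ℂ) / 2))

/-- The span `𝒟⁻` of the operators `tʲ·g(D + j/2)` with `g(−X) = (−1)^{j+1}·g(X)`. -/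
noncomputable def Dminus
    (W : ℤ → ℂ[X] → Module.End ℂ (LaurentPolynomial ℂ)) :
    Submodule ℂ (Module.End ℂ (LaurentPolynomial ℂ)) :=
  Submodule.span ℂ
    {A | ∃ (j : ℤ) (g : ℂ[X]),
      g.comp (-Polynomial.X) = ((-1 : ℂ) ^ (j + 1)) • g ∧
      A = W j (g.comp (Polynomial.X + Polynomial.C ((j : ℂ) / 2)))}

theorem Submodule.lie_mem_span_of_forall_lie_mem_span {R A : Type*} [CommSemiring R] [Ring A]
    [Algebra R A] {S : Set A} (hS : ∀ x ∈ S, ∀ y ∈ S, ⁅x, y⁆ ∈ span R S)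
    {a b : A} (ha : a ∈ span R S) (hb : b ∈ span R S) : ⁅a, b⁆ ∈ span R S := by
  let commutator : A →ₗ[R] A →ₗ[R] A := LinearMap.mul R A - (LinearMap.mul R A).flip
  have hcomm (x y : A) : commutator x y = ⁅x, y⁆ := by simp [commutator, Ring.lie_def]
  have hle : map₂ commutator (span R S) (span R S) ≤ span R S := by
    rw [map₂_span_span, span_le]
    rintro _ ⟨x, hx, y, hy, rfl⟩
    simpa only [hcomm, SetLike.mem_coe] using hS x hx y hy
  rw [← hcomm]
  exact hle (apply_mem_map₂ _ ha hb)

theorem LaurentPolynomial.linearMap_ext {R M : Type*} [CommSemiring R] [AddCommMonoid M]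
    [Module R M] {φ ψ : R[T;T⁻¹] →ₗ[R] M} (h : ∀ n, φ (T n) = ψ (T n)) : φ = ψ := by
  refine LinearMap.ext fun p => ?_
  induction p using LaurentPolynomial.induction_on' with
  | add p q hp hq => rw [map_add, map_add, hp, hq]
  | C_mul_T n a => rw [← smul_eq_C_mul, map_smul, map_smul, h]

section Commutator

variable (W : ℤ → ℂ[X] → Module.End ℂ (LaurentPolynomial ℂ))
    (hW : ∀ (k : ℤ) (f : ℂ[X]) (m : ℤ),
      W k f (T m) = f.eval (m : ℂ) • (T (m + k) : LaurentPolynomial ℂ))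
include hW

theorem lie_W_W (r s : ℤ) (f g : ℂ[X]) :
    ⁅W r f, W s g⁆ =
      W (r + s)
        (f.comp (X + Polynomial.C (s : ℂ)) * g - g.comp (X + Polynomial.C (r : ℂ)) * f) := by
  refine LaurentPolynomial.linearMap_ext fun m => ?_
  rw [Ring.lie_def, LinearMap.sub_apply, Module.End.mul_apply, Module.End.mul_apply, hW, hW,
    map_smul, map_smul, hW, hW, smul_smul, smul_smul, add_right_comm m s r, ← sub_smul, hW,
    add_assoc]
  congr 1
  simp only [eval_sub, eval_mul, eval_comp, eval_add, eval_X, eval_C, Int.cast_add]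
  ring

theorem lie_W_shift_W_shift (r s : ℤ) (f g : ℂ[X]) :
    ⁅W r (f.comp (X + Polynomial.C ((r : ℂ) / 2))),
        W s (g.comp (X + Polynomial.C ((s : ℂ) / 2)))⁆ =
      W (r + s) ((hPoly r s f g).comp (X + Polynomial.C (((r + s : ℤ) : ℂ) / 2))) := by
  rw [lie_W_W W hW]
  congr 1
  refine Polynomial.funext fun y => ?_
  simp only [hPoly, eval_sub, eval_mul, eval_comp, eval_add, eval_X, eval_C, Int.cast_add]
  ring_nf

end Commutator

theorem hPoly_comp_neg_X (r s : ℤ) (f g : ℂ[X]) :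
    (hPoly r s f g).comp (-X) = -hPoly r s (f.comp (-X)) (g.comp (-X)) := by
  refine Polynomial.funext fun y => ?_
  simp only [hPoly, eval_neg, eval_sub, eval_mul, eval_comp, eval_add, eval_X, eval_C]
  ring_nf

theorem hPoly_smul_smul (r s : ℤ) (a b : ℂ) (f g : ℂ[X]) :
    hPoly r s (a • f) (b • g) = (a * b) • hPoly r s f g := by
  simp only [hPoly, smul_comp, smul_mul_smul_comm, smul_sub]

theorem hPoly_comp_neg_X_of_parity (r s : ℤ) (f g : ℂ[X])
    (hf : f.comp (-X) = ((-1 : ℂ) ^ (r + 1)) • f)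
    (hg : g.comp (-X) = ((-1 : ℂ) ^ (s + 1)) • g) :
    (hPoly r s f g).comp (-X) = ((-1 : ℂ) ^ (r + s + 1)) • hPoly r s f g := by
  have hsign : -((-1 : ℂ) ^ (r + 1) * (-1) ^ (s + 1)) = (-1) ^ (r + s + 1) := by
    rw [← zpow_add₀ (neg_ne_zero.mpr one_ne_zero), show r + 1 + (s + 1) = r + s + 1 + 1 by ring,
      zpow_add_one₀ (neg_ne_zero.mpr one_ne_zero), mul_neg_one, neg_neg]
  rw [hPoly_comp_neg_X, hf, hg, hPoly_smul_smul, ← neg_smul, hsign]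

/-- with `h(Y) = f(Y + s/2)·g(Y − r/2) − f(Y − s/2)·g(Y + r/2)`:
(i) `[tʳ·f(D + r/2), tˢ·g(D + s/2)] = t^{r+s}·h(D + (r+s)/2)`;
(ii) if `f(−X) = (−1)^{r+1}·f(X)` and `g(−X) = (−1)^{s+1}·g(X)` then
`h(−Y) = (−1)^{r+s+1}·h(Y)`; consequently `𝒟⁻` is closed under commutators. -/
theorem Dminus_lie_closed
    (W : ℤ → ℂ[X] → Module.End ℂ (LaurentPolynomial ℂ))
    (hW : ∀ (k : ℤ) (f : ℂ[X]) (m : ℤ),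
      W k f (T m) = f.eval (m : ℂ) • (T (m + k) : LaurentPolynomial ℂ)) :
    (∀ (r s : ℤ) (f g : ℂ[X]),
      ⁅W r (f.comp (Polynomial.X + Polynomial.C ((r : ℂ) / 2))),
          W s (g.comp (Polynomial.X + Polynomial.C ((s : ℂ) / 2)))⁆ =
        W (r + s)
          ((hPoly r s f g).comp
            (Polynomial.X + Polynomial.C (((r + s : ℤ) : ℂ) / 2)))) ∧
    (∀ (r s : ℤ) (f g : ℂ[X]),
      f.comp (-Polynomial.X) = ((-1 : ℂ) ^ (r + 1)) • f →
      g.comp (-Polynomial.X) = ((-1 : ℂ) ^ (s + 1)) • g →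
      (hPoly r s f g).comp (-Polynomial.X) =
        ((-1 : ℂ) ^ (r + s + 1)) • hPoly r s f g) ∧
    (∀ A ∈ Dminus W, ∀ B ∈ Dminus W, ⁅A, B⁆ ∈ Dminus W) := by
  refine ⟨lie_W_shift_W_shift W hW, hPoly_comp_neg_X_of_parity, fun A hA B hB => ?_⟩
  refine Submodule.lie_mem_span_of_forall_lie_mem_span ?_ hA hB
  rintro _ ⟨r, f, hf, rfl⟩ _ ⟨s, g, hg, rfl⟩
  rw [lie_W_shift_W_shift W hW]
  exact Submodule.subset_span
    ⟨r + s, hPoly r s f g, hPoly_comp_neg_X_of_parity r s f g hf hg, rfl⟩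
end

section
/- For every integer a and every natural number b, there exists a polynomial p ∈ ℂ[X] of degree strictly less than 2b+1 such that the operator t^{2a}·(D^{2b+1} + p(D)) on ℂ[t,t⁻¹] belongs to the Lie subalgebra L of the ℂ-endomorphism algebra of ℂ[t,t⁻¹] generated (under commutator) by the four operators t, D³, t²(D+1) and t⁻²(D−1). (This is the generation, up to lower-order terms, of the elements w_{2a,2b+1} of W⁻ in the proof of Lemma 2.4; the case a = 0 gives the elements w_{0,2b+1} up to lower terms.) -/
open Polynomial LaurentPolynomial

attribute [local instance 100] LieRing.ofAssociativeRing

/-!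
Write `W k f = tᵏ f(D)`. Since `D tˡ = tˡ (D + l)`, the commutator of `tᵏ f(D)` and `tˡ g(D)` is
`tᵏ⁺ˡ (f(D + l) g(D) - g(D + k) f(D))`, and when `f, g` are monic of degrees `p, q` this polynomial
has degree `p + q - 1` and leading coefficient `l p - k q`: the top coefficients cancel and the
next ones are read off from `nextCoeff`, which is additive on monic products and moves by `p r`
under `X ↦ X + r`.

Hence "`tᵏ (Dᵈ + lower terms)` lies in `L`" propagates along brackets. Bracketing `t²(D + 1)`
with `D³` over and over (leading coefficient `6`) gives `t² (D^(2b+1) + ⋯)` for every `b`, and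
`[t, t⁻²(D - 1)] = -t⁻¹`. Bracketing with `t` or `t⁻¹` then moves the power of `t` by `±1` at the
cost of one degree in `D` (leading coefficient `±(d + 1)`), so `|2a - 2|` such brackets turn
`t² (D^(2b+1+|2a-2|) + ⋯)` into `t^(2a) (D^(2b+1) + ⋯)`.
-/

namespace Polynomial

section Semiring

variable {R : Type*} [Semiring R]

theorem nextCoeff_taylor (f : R[X]) (r : R) :
    (taylor r f).nextCoeff = f.nextCoeff + f.natDegree * f.leadingCoeff * r := by
  rcases Nat.eq_zero_or_pos f.natDegree with h0 | hpos
  · simp [nextCoeff, natDegree_taylor, h0]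
  rw [nextCoeff_of_natDegree_pos (by rwa [natDegree_taylor]), nextCoeff_of_natDegree_pos hpos,
    natDegree_taylor, taylor_coeff]
  obtain ⟨n, hn⟩ : ∃ n, f.natDegree = n + 1 := ⟨_, (Nat.succ_pred_eq_of_pos hpos).symm⟩
  have hdeg : (hasseDeriv n f).natDegree ≤ 1 := (natDegree_hasseDeriv_le f n).trans (by omega)
  rw [leadingCoeff, hn, Nat.add_sub_cancel, eq_X_add_C_of_natDegree_le_one hdeg]
  rw [eval_add, eval_C, eval_mul_X, eval_C, hasseDeriv_coeff, hasseDeriv_coeff, zero_add,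
    Nat.choose_self, Nat.cast_one, one_mul, add_comm 1 n, Nat.choose_succ_self_right]
  exact add_comm _ _

theorem IsMonicOfDegree.taylor {f : R[X]} {p : ℕ} (hf : IsMonicOfDegree f p) (r : R) :
    IsMonicOfDegree (taylor r f) p :=
  ⟨by rw [natDegree_taylor, hf.natDegree_eq], by
    rw [Monic, leadingCoeff_taylor, hf.leadingCoeff_eq]⟩

end Semiring

variable {R : Type*} [CommRing R] {f g : R[X]} {p q d : ℕ}

theorem natDegree_taylor_mul_sub_taylor_mul_le (hf : IsMonicOfDegree f p)
    (hg : IsMonicOfDegree g q) (hpq : p + q = d + 1) (k l : R) :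
    (taylor l f * g - taylor k g * f).natDegree ≤ d := by
  have hF : IsMonicOfDegree (taylor l f * g) (d + 1) := hpq ▸ (hf.taylor l).mul hg
  have hG : IsMonicOfDegree (taylor k g * f) (d + 1) := by
    rw [← hpq, add_comm]; exact (hg.taylor k).mul hf
  exact Nat.le_of_lt_succ (hF.natDegree_sub_lt d.succ_ne_zero hG)

theorem coeff_taylor_mul_sub_taylor_mul (hf : IsMonicOfDegree f p)
    (hg : IsMonicOfDegree g q) (hpq : p + q = d + 1) (k l : R) :
    (taylor l f * g - taylor k g * f).coeff d = l * p - k * q := by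
  have hF : IsMonicOfDegree (taylor l f * g) (d + 1) := hpq ▸ (hf.taylor l).mul hg
  have hG : IsMonicOfDegree (taylor k g * f) (d + 1) := by
    rw [← hpq, add_comm]; exact (hg.taylor k).mul hf
  have coeff_eq_nextCoeff {P : R[X]} (hP : IsMonicOfDegree P (d + 1)) :
      P.coeff d = P.nextCoeff := by
    rw [nextCoeff_of_natDegree_pos (by rw [hP.natDegree_eq]; omega), hP.natDegree_eq,
      Nat.add_sub_cancel]
  rw [coeff_sub, coeff_eq_nextCoeff hF, coeff_eq_nextCoeff hG,
    (hf.taylor l).monic.nextCoeff_mul hg.monic, (hg.taylor k).monic.nextCoeff_mul hf.monic,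
    nextCoeff_taylor, nextCoeff_taylor, hf.natDegree_eq, hg.natDegree_eq, hf.leadingCoeff_eq,
    hg.leadingCoeff_eq]
  ring

end Polynomial

namespace LaurentPolynomial

variable {K : Type*} [Field K]

/-- `L` contains `tᵏ (Dᵈ + lower order terms)`. -/
def MemUpToLowerTerms (L : LieSubalgebra K (Module.End K K[T;T⁻¹]))
    (W : ℤ → K[X] → Module.End K K[T;T⁻¹]) (k : ℤ) (d : ℕ) : Prop :=
  ∃ f : K[X], f.IsMonicOfDegree d ∧ W k f ∈ L

noncomputable def generatedLieSubalgebra (W : ℤ → K[X] → Module.End K K[T;T⁻¹]) :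
    LieSubalgebra K (Module.End K K[T;T⁻¹]) :=
  LieSubalgebra.lieSpan K _ {W 1 1, W 0 (X ^ 3), W 2 X + W 2 1, W (-2) X - W (-2) 1}

variable {W : ℤ → K[X] → Module.End K K[T;T⁻¹]}

theorem memUpToLowerTerms_one_zero : MemUpToLowerTerms (generatedLieSubalgebra W) W 1 0 :=
  ⟨1, isMonicOfDegree_zero_iff.mpr rfl, LieSubalgebra.subset_lieSpan (by simp)⟩

theorem memUpToLowerTerms_zero_three : MemUpToLowerTerms (generatedLieSubalgebra W) W 0 3 :=
  ⟨X ^ 3, isMonicOfDegree_X_pow K 3, LieSubalgebra.subset_lieSpan (by simp)⟩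

variable
    (hW : ∀ (k : ℤ) (f : K[X]) (m : ℤ), W k f (T m) = f.eval (m : K) • (T (m + k) : K[T;T⁻¹]))
include hW

theorem W_add (k : ℤ) (f g : K[X]) : W k (f + g) = W k f + W k g :=
  AddMonoidAlgebra.lhom_ext' fun m => LinearMap.ext_ring <| by simp [hW, add_smul]

theorem W_sub (k : ℤ) (f g : K[X]) : W k (f - g) = W k f - W k g :=
  AddMonoidAlgebra.lhom_ext' fun m => LinearMap.ext_ring <| by simp [hW, sub_smul]

theorem W_smul (k : ℤ) (c : K) (f : K[X]) : W k (c • f) = c • W k f :=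
  AddMonoidAlgebra.lhom_ext' fun m => LinearMap.ext_ring <| by simp [hW, smul_smul]

theorem lie_W_W (k l : ℤ) (f g : K[X]) :
    ⁅W k f, W l g⁆ = W (k + l) (taylor (l : K) f * g - taylor (k : K) g * f) :=
  AddMonoidAlgebra.lhom_ext' fun m => LinearMap.ext_ring <| by
    simp only [Ring.lie_def, LinearMap.coe_comp, Function.comp_apply,
      AddMonoidAlgebra.lsingle_apply, single_eq_C_mul_T, map_one, one_mul, LinearMap.sub_apply,
      Module.End.mul_apply, hW, map_smul, Int.cast_add, smul_smul, eval_sub, eval_mul,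
      taylor_eval, sub_smul]
    rw [add_right_comm m l k, add_assoc, mul_comm (eval _ g), mul_comm (eval _ f) (eval (_ + _) g)]

variable {L : LieSubalgebra K (Module.End K K[T;T⁻¹])}

theorem MemUpToLowerTerms.lie {k l : ℤ} {p q d : ℕ} (h₁ : MemUpToLowerTerms L W k p)
    (h₂ : MemUpToLowerTerms L W l q) (hpq : p + q = d + 1) (hc : (l : K) * p - k * q ≠ 0) :
    MemUpToLowerTerms L W (k + l) d := by
  obtain ⟨f, hf, hfL⟩ := h₁
  obtain ⟨g, hg, hgL⟩ := h₂
  refine ⟨((l : K) * p - k * q)⁻¹ • (taylor (l : K) f * g - taylor (k : K) g * f),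
    (isMonicOfDegree_iff _ _).mpr ⟨?_, ?_⟩, ?_⟩
  · exact (natDegree_smul_le _ _).trans (natDegree_taylor_mul_sub_taylor_mul_le hf hg hpq _ _)
  · rw [coeff_smul, coeff_taylor_mul_sub_taylor_mul hf hg hpq, smul_eq_mul, inv_mul_cancel₀ hc]
  · rw [W_smul hW, ← lie_W_W hW]
    exact L.smul_mem _ (L.lie_mem hfL hgL)

theorem MemUpToLowerTerms.shift [CharZero K] {l s : ℤ} {d : ℕ}
    (h : MemUpToLowerTerms L W l (d + 1)) (hs : MemUpToLowerTerms L W s 0) (hs₀ : s ≠ 0) :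
    MemUpToLowerTerms L W (l + s) d :=
  h.lie hW hs (add_zero _) <| by
    simpa using And.intro hs₀ (Nat.cast_add_one_ne_zero (R := K) d)

theorem MemUpToLowerTerms.shift_iterate [CharZero K] {s : ℤ}
    (hs : MemUpToLowerTerms L W s 0) (hs₀ : s ≠ 0) (n : ℕ) :
    ∀ {l : ℤ} {d : ℕ}, MemUpToLowerTerms L W l (d + n) →
      MemUpToLowerTerms L W (l + n * s) d := by
  induction n with
  | zero => simp
  | succ n ih =>
    intro l d h
    rw [add_comm n 1, ← add_assoc] at h
    simpa [add_mul, add_assoc] using (ih h).shift hW hs hs₀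

theorem memUpToLowerTerms_two_one : MemUpToLowerTerms (generatedLieSubalgebra W) W 2 1 :=
  ⟨X + Polynomial.C 1, isMonicOfDegree_X_add_one 1, by
    rw [W_add hW, Polynomial.C_1]; exact LieSubalgebra.subset_lieSpan (by simp)⟩

theorem memUpToLowerTerms_neg_one_zero :
    MemUpToLowerTerms (generatedLieSubalgebra W) W (-1) 0 := by
  have h : MemUpToLowerTerms (generatedLieSubalgebra W) W (-2) 1 :=
    ⟨X - Polynomial.C 1, isMonicOfDegree_X_sub_one 1, by
      rw [W_sub hW, Polynomial.C_1]; exact LieSubalgebra.subset_lieSpan (by simp)⟩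
  simpa using memUpToLowerTerms_one_zero.lie hW h rfl (by simp)

theorem memUpToLowerTerms_two_odd [CharZero K] (b : ℕ) :
    MemUpToLowerTerms (generatedLieSubalgebra W) W 2 (2 * b + 1) := by
  induction b with
  | zero => exact memUpToLowerTerms_two_one hW
  | succ b ih => simpa using memUpToLowerTerms_zero_three.lie hW ih (by ring) (by simp)

theorem memUpToLowerTerms_even_odd [CharZero K] (a : ℤ) (b : ℕ) :
    MemUpToLowerTerms (generatedLieSubalgebra W) W (2 * a) (2 * b + 1) := by
  set m := (a - 1).natAbs
  have h := memUpToLowerTerms_two_odd hW (b + m)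
  rw [show 2 * (b + m) + 1 = 2 * b + 1 + 2 * m by ring] at h
  rcases Int.natAbs_eq (a - 1) with ha | ha
  · convert memUpToLowerTerms_one_zero.shift_iterate hW one_ne_zero _ h using 2
    push_cast; omega
  · convert (memUpToLowerTerms_neg_one_zero hW).shift_iterate hW (by norm_num) _ h using 2
    push_cast; omega

end LaurentPolynomial

/-- for every integer `a` and natural number `b`, there exists a
polynomial `p ∈ ℂ[X]` of degree `< 2b+1` such that the operator
`t^{2a}·(D^{2b+1} + p(D))` (realized as `W(2a, X^{2b+1} + p)`) belongs to the Lie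
subalgebra generated by `t`, `D³`, `t²(D+1)` and `t⁻²(D−1)`.  Here `W(k,f)` is
determined by `W(k,f)(tᵐ) = f(m)·tᵐ⁺ᵏ`, and `w_{k,ℓ} = W(k,Xˡ)`. -/
theorem w_even_odd_mem_lieSpan_up_to_lower_terms
    (W : ℤ → ℂ[X] → Module.End ℂ (LaurentPolynomial ℂ))
    (hW : ∀ (k : ℤ) (f : ℂ[X]) (m : ℤ),
      W k f (T m) = f.eval (m : ℂ) • (T (m + k) : LaurentPolynomial ℂ))
    (a : ℤ) (b : ℕ) :
    ∃ p : ℂ[X], p.degree < ((2 * b + 1 : ℕ) : WithBot ℕ) ∧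
      W (2 * a) (Polynomial.X ^ (2 * b + 1) + p) ∈
        LieSubalgebra.lieSpan ℂ (Module.End ℂ (LaurentPolynomial ℂ))
          {W 1 1, W 0 (Polynomial.X ^ 3),
            W 2 Polynomial.X + W 2 1, W (-2) Polynomial.X - W (-2) 1} := by
  obtain ⟨f, hf, hfL⟩ := memUpToLowerTerms_even_odd hW a b
  obtain ⟨p, rfl, hp⟩ := hf.exists_natDegree_lt (Nat.succ_ne_zero _)
  exact ⟨p, degree_le_natDegree.trans_lt (WithBot.coe_lt_coe.mpr hp), hfL⟩
end
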